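/- arXiv:2311.15342 — 3 statements merged into one kernel-verified Lean document; each statement's English description precedes it below -/
import Mathlib

section
/- Let X be the 2-truncated simplicial set of the previous context with X_2 = {(0,0),(1,0),(0,1)} ⊔ A, and partition the two taco spaces X_2 ×_{d_1,d_2} X_2 and X_2 ×_{d_0,d_1} X_2 according to the values (i,j,k) of the boundary edge maps (e_1,e_2,e_3). Then for each (i,j,k) ∈ {0,1}³, the corresponding pieces M_{ijk} and M'_{ijk} have equal cardinality: both are singletons for (i,j,k) ∈ {(0,0,0),(1,0,0),(0,1,0),(0,0,1)}, and both are in bijection with A for the remaining four values. Hence the two taco spaces are isomorphic as spans from (X_1)³ to X_1. -/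
/- The 2-truncated simplicial set with `X₀ = {0}`, `X₁ = {0,1}` and
`X₂ = {(0,0),(1,0),(0,1)} ⊔ A`, from Example `nolift`. -/

/-- `X₂ = {(0,0),(1,0),(0,1)} ⊔ A`, encoded as pairs in `Fin 2 × Fin 2`
other than `(1,1)`, together with the set `A`. -/
abbrev X2 (A : Type) : Type := {p : Fin 2 × Fin 2 // p ≠ (1, 1)} ⊕ A

/-- The face map `d₀ : X₂ → X₁`: `d₀ (k,ℓ) = ℓ` and `d₀ a = 1` for `a ∈ A`. -/
def d0 {A : Type} : X2 A → Fin 2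
  | Sum.inl p => p.1.2
  | Sum.inr _ => 1

/-- The face map `d₁ : X₂ → X₁`: `d₁ (k,ℓ) = k + ℓ` and `d₁ a = 0` for `a ∈ A`. -/
def d1 {A : Type} : X2 A → Fin 2
  | Sum.inl p => p.1.1 + p.1.2
  | Sum.inr _ => 0

/-- The face map `d₂ : X₂ → X₁`: `d₂ (k,ℓ) = k` and `d₂ a = 1` for `a ∈ A`. -/
def d2 {A : Type} : X2 A → Fin 2
  | Sum.inl p => p.1.1
  | Sum.inr _ => 1

/-- The piece `M_{ijk}` of the taco space `X₂ ×_{d₁,d₂} X₂`, with boundary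
edges `e₁ = d₂ξ = i`, `e₂ = d₀ξ = j`, `e₃ = d₀ξ' = k`. -/
def Mset (A : Type) (i j k : Fin 2) : Set (X2 A × X2 A) :=
  {t | d1 t.1 = d2 t.2 ∧ d2 t.1 = i ∧ d0 t.1 = j ∧ d0 t.2 = k}

/-- The piece `M'_{ijk}` of the taco space `X₂ ×_{d₀,d₁} X₂`, with boundary
edges `e₁ = d₂ξ = i`, `e₂ = d₂ξ' = j`, `e₃ = d₀ξ' = k`. -/
def M'set (A : Type) (i j k : Fin 2) : Set (X2 A × X2 A) :=
  {t | d0 t.1 = d1 t.2 ∧ d2 t.1 = i ∧ d2 t.2 = j ∧ d0 t.2 = k}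

/-!
A 2-simplex `ξ` is determined by its spine `(d₂ξ, d₀ξ)` unless the spine is `(1,1)`, in which
case the simplices with that spine form a copy of `A`; moreover `d₁ = d₂ + d₀` in `ℤ/2` on all
of `X₂`. Writing `F(m,n) = spineFiber A m n` for the simplices with spine `(m,n)`, this gives
`M_{ijk} ≃ F(i,j) × F(i+j,k)` and `M'_{ijk} ≃ F(i,j+k) × F(j,k)`. On each side at most one
factor is `F(1,1)`, and this happens on one side exactly when it happens on the other.
-/

variable {A : Type}

theorem d1_eq_d2_add_d0 (ξ : X2 A) : d1 ξ = d2 ξ + d0 ξ := by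
  rcases ξ with p | a <;> rfl

def spineFiber (A : Type) (m n : Fin 2) : Set (X2 A) :=
  {ξ | d2 ξ = m ∧ d0 ξ = n}

namespace spineFiber

variable {m n : Fin 2}

theorem nonempty_unique (h : (m, n) ≠ (1, 1)) : Nonempty (Unique (spineFiber A m n)) := by
  refine ⟨⟨⟨⟨Sum.inl ⟨(m, n), h⟩, rfl, rfl⟩⟩, ?_⟩⟩
  rintro ⟨p | a, rfl, rfl⟩
  · rfl
  · exact absurd rfl h

noncomputable def oneOneEquiv : spineFiber A 1 1 ≃ A := by
  refine (Equiv.ofBijective (fun a => (⟨Sum.inr a, rfl, rfl⟩ : spineFiber A 1 1))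
    ⟨fun _ _ h => Sum.inr_injective (congrArg Subtype.val h), ?_⟩).symm
  rintro ⟨p | a, hm, hn⟩
  · exact absurd (Prod.ext hm hn) p.2
  · exact ⟨a, rfl⟩

theorem nonempty_prod_equiv {m' n' : Fin 2} (h : Xor ((m, n) = (1, 1)) ((m', n') = (1, 1))) :
    Nonempty (spineFiber A m n × spineFiber A m' n' ≃ A) := by
  rcases h with ⟨h, h'⟩ | ⟨h', h⟩
  · obtain ⟨_⟩ := nonempty_unique (A := A) h'
    cases h
    exact ⟨(Equiv.prodUnique _ _).trans oneOneEquiv⟩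
  · obtain ⟨_⟩ := nonempty_unique (A := A) h
    cases h'
    exact ⟨(Equiv.uniqueProd _ _).trans oneOneEquiv⟩

end spineFiber

variable {i j k : Fin 2}

theorem Mset.mem_iff_spineFiber (t : X2 A × X2 A) :
    t ∈ Mset A i j k ↔ t.1 ∈ spineFiber A i j ∧ t.2 ∈ spineFiber A (i + j) k := by
  simp only [Mset, spineFiber, Set.mem_ofPred_eq, d1_eq_d2_add_d0]
  constructor
  · rintro ⟨h, rfl, rfl, rfl⟩
    exact ⟨⟨rfl, rfl⟩, h.symm, rfl⟩
  · rintro ⟨⟨rfl, rfl⟩, h, rfl⟩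
    exact ⟨h.symm, rfl, rfl, rfl⟩

theorem M'set.mem_iff_spineFiber (t : X2 A × X2 A) :
    t ∈ M'set A i j k ↔ t.1 ∈ spineFiber A i (j + k) ∧ t.2 ∈ spineFiber A j k := by
  simp only [M'set, spineFiber, Set.mem_ofPred_eq, d1_eq_d2_add_d0]
  constructor
  · rintro ⟨h, rfl, rfl, rfl⟩
    exact ⟨⟨rfl, h⟩, rfl, rfl⟩
  · rintro ⟨⟨rfl, h⟩, rfl, rfl⟩
    exact ⟨h, rfl, rfl, rfl⟩

def Mset.equivSpineFiberProd : Mset A i j k ≃ spineFiber A i j × spineFiber A (i + j) k :=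
  (Equiv.subtypeEquivRight Mset.mem_iff_spineFiber).trans Equiv.subtypeProdEquivProd

def M'set.equivSpineFiberProd : M'set A i j k ≃ spineFiber A i (j + k) × spineFiber A j k :=
  (Equiv.subtypeEquivRight M'set.mem_iff_spineFiber).trans Equiv.subtypeProdEquivProd

theorem Mset.nonempty_unique (h : (i, j) ≠ (1, 1)) (h' : (i + j, k) ≠ (1, 1)) :
    Nonempty (Unique (Mset A i j k)) := by
  obtain ⟨_⟩ := spineFiber.nonempty_unique (A := A) h
  obtain ⟨_⟩ := spineFiber.nonempty_unique (A := A) h'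
  exact ⟨(Mset.equivSpineFiberProd.trans (Equiv.prodUnique _ _)).unique⟩

theorem M'set.nonempty_unique (h : (i, j + k) ≠ (1, 1)) (h' : (j, k) ≠ (1, 1)) :
    Nonempty (Unique (M'set A i j k)) := by
  obtain ⟨_⟩ := spineFiber.nonempty_unique (A := A) h
  obtain ⟨_⟩ := spineFiber.nonempty_unique (A := A) h'
  exact ⟨(M'set.equivSpineFiberProd.trans (Equiv.prodUnique _ _)).unique⟩

theorem Mset.nonempty_equiv (h : Xor ((i, j) = (1, 1)) ((i + j, k) = (1, 1))) :
    Nonempty (Mset A i j k ≃ A) :=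
  (spineFiber.nonempty_prod_equiv h).map Mset.equivSpineFiberProd.trans

theorem M'set.nonempty_equiv (h : Xor ((i, j + k) = (1, 1)) ((j, k) = (1, 1))) :
    Nonempty (M'set A i j k ≃ A) :=
  (spineFiber.nonempty_prod_equiv h).map M'set.equivSpineFiberProd.trans

/-- For each `(i,j,k)` the pieces `M_{ijk}` and `M'_{ijk}` have the same
cardinality: both are singletons for `(i,j,k) ∈ {(0,0,0),(1,0,0),(0,1,0),(0,0,1)}`
and both are in bijection with `A` for the remaining four values; hence the
two taco spaces are isomorphic as spans from `(X₁)³` to `X₁`. -/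
theorem taco_pieces_equiv (A : Type) :
    (∀ i j k : Fin 2, Nonempty (Mset A i j k ≃ M'set A i j k)) ∧
    (∀ i j k : Fin 2,
      ((i, j, k) = (0, 0, 0) ∨ (i, j, k) = (1, 0, 0) ∨
       (i, j, k) = (0, 1, 0) ∨ (i, j, k) = (0, 0, 1)) →
      Nonempty (Unique (Mset A i j k)) ∧ Nonempty (Unique (M'set A i j k))) ∧
    (∀ i j k : Fin 2,
      ¬((i, j, k) = (0, 0, 0) ∨ (i, j, k) = (1, 0, 0) ∨
        (i, j, k) = (0, 1, 0) ∨ (i, j, k) = (0, 0, 1)) →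
      Nonempty (Mset A i j k ≃ A) ∧ Nonempty (M'set A i j k ≃ A)) := by
  have pieces_unique : ∀ i j k : Fin 2,
      ((i, j, k) = (0, 0, 0) ∨ (i, j, k) = (1, 0, 0) ∨
       (i, j, k) = (0, 1, 0) ∨ (i, j, k) = (0, 0, 1)) →
      Nonempty (Unique (Mset A i j k)) ∧ Nonempty (Unique (M'set A i j k)) := by
    intro i j k h
    refine ⟨Mset.nonempty_unique ?_ ?_, M'set.nonempty_unique ?_ ?_⟩ <;> revert i j k <;> decide
  have pieces_equiv : ∀ i j k : Fin 2,
      ¬((i, j, k) = (0, 0, 0) ∨ (i, j, k) = (1, 0, 0) ∨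
        (i, j, k) = (0, 1, 0) ∨ (i, j, k) = (0, 0, 1)) →
      Nonempty (Mset A i j k ≃ A) ∧ Nonempty (M'set A i j k ≃ A) := by
    intro i j k h
    refine ⟨Mset.nonempty_equiv ?_, M'set.nonempty_equiv ?_⟩ <;> revert i j k <;> decide
  refine ⟨fun i j k => ?_, pieces_unique, pieces_equiv⟩
  by_cases h : (i, j, k) = (0, 0, 0) ∨ (i, j, k) = (1, 0, 0) ∨
      (i, j, k) = (0, 1, 0) ∨ (i, j, k) = (0, 0, 1)
  · obtain ⟨⟨_⟩, ⟨_⟩⟩ := pieces_unique i j k h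
    exact ⟨Equiv.ofUnique _ _⟩
  · obtain ⟨⟨e⟩, ⟨e'⟩⟩ := pieces_equiv i j k h
    exact ⟨e.trans e'.symm⟩
end

section
/- Let M be a commutative partial monoid and N_•M its nerve. For each n, the action of the symmetric group S_n on N_nM by permuting components is well-defined (i.e., if (x_1,…,x_n) is fully composable, so is any permutation of it), and the transpositions θ_i (swapping entries i and i+1) satisfy the compatibility θ_i ∘ d_j = d_j ∘ θ_i for i < j−1, d_i ∘ θ_i = d_i, and θ_i ∘ s_j = s_j ∘ θ_{i−1} for i > j+1. -/
/-- A commutative partial monoid: a partially defined multiplication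
(`none` = undefined) which is unital, associative (both sides defined and
equal, or both undefined) and commutative. -/
structure CommPartialMonoid (M : Type) where
  mul : M → M → Option M
  one : M
  one_mul : ∀ x, mul one x = some x
  mul_one : ∀ x, mul x one = some x
  assoc : ∀ x y z, (mul x y).bind (fun w => mul w z) = (mul y z).bind (fun w => mul x w)
  comm : ∀ x y, mul x y = mul y x

/-- The iterated partial product of a tuple; a tuple is fully composable
when this is defined (`isSome`). -/
def pprod {M : Type} (P : CommPartialMonoid M) : List M → Option M
  | [] => some P.one
  | x :: xs => (pprod P xs).bind fun w => P.mul x w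

/-- Swap the adjacent entries at (0-indexed) positions `p` and `p+1`;
the transposition `θ_{p+1}` acting on tuples. -/
def swapAdj {M : Type} : ℕ → List M → List M
  | 0, x :: y :: t => y :: x :: t
  | p + 1, x :: t => x :: swapAdj p t
  | _, l => l

open List

/-- The inner face map: multiply the adjacent entries at (0-indexed)
positions `p` and `p+1` (partially defined); this is `d_{p+1}` on tuples. -/
def dmid {M : Type} (P : CommPartialMonoid M) : ℕ → List M → Option (List M)
  | 0, x :: y :: t => (P.mul x y).map (· :: t)
  | p + 1, x :: t => (dmid P p t).map (x :: ·)
  | _, l => some l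

theorem pprod_perm {M : Type} (P : CommPartialMonoid M) {l l' : List M}
    (h : l.Perm l') : pprod P l = pprod P l' := by
  induction h with
  | nil => rfl
  | cons x _ ih => simp [pprod, ih]
  | swap x y t =>
      simp only [pprod]
      cases hz : pprod P t with
      | none => simp
      | some z =>
          simp only [Option.bind_some]
          have h1 := P.assoc x y z
          have h2 := P.assoc y x z
          rw [P.comm y x] at h2
          rw [← h1, ← h2]
  | trans _ _ ih1 ih2 => rw [ih1, ih2]

theorem swapAdj_nil {M : Type} (a : ℕ) : swapAdj (M := M) a [] = [] := by
  cases a <;> rfl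

theorem swapAdj_single {M : Type} (a : ℕ) (x : M) : swapAdj a [x] = [x] := by
  cases a with
  | zero => rfl
  | succ p => simp [swapAdj, swapAdj_nil]

theorem dmid_nil {M : Type} (P : CommPartialMonoid M) (b : ℕ) :
    dmid P b [] = some [] := by cases b <;> rfl

theorem dmid_single {M : Type} (P : CommPartialMonoid M) (b : ℕ) (x : M) :
    dmid P b [x] = some [x] := by
  cases b with
  | zero => rfl
  | succ p => simp [dmid, dmid_nil]

-- Part 2
theorem dmid_swapAdj {M : Type} (P : CommPartialMonoid M) :
    ∀ (l : List M) (a b : ℕ), a + 2 ≤ b →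
      dmid P b (swapAdj a l) = (dmid P b l).map (swapAdj a) := by
  intro l
  induction l with
  | nil => intro a b _; rw [swapAdj_nil]; simp [dmid_nil, swapAdj_nil]
  | cons x t ih =>
      intro a b hab
      cases a with
      | zero =>
          cases t with
          | nil => rw [swapAdj_single]; simp [dmid_single, swapAdj_single]
          | cons y t' =>
              obtain ⟨q, rfl⟩ : ∃ q, b = q + 2 := ⟨b - 2, by omega⟩
              show dmid P (q+2) (y :: x :: t') = (dmid P (q+2) (x :: y :: t')).map _
              simp only [dmid, Option.map_map]
              congr 1
      | succ p =>
          obtain ⟨q, rfl⟩ : ∃ q, b = q + 1 := ⟨b - 1, by omega⟩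
          show dmid P (q+1) (x :: swapAdj p t) = (dmid P (q+1) (x :: t)).map _
          simp only [dmid, ih p q (by omega), Option.map_map]
          rfl

-- Part 3
theorem dmid_swapAdj_self {M : Type} (P : CommPartialMonoid M) :
    ∀ (l : List M) (a : ℕ), dmid P a (swapAdj a l) = dmid P a l := by
  intro l
  induction l with
  | nil => intro a; rw [swapAdj_nil]
  | cons x t ih =>
      intro a
      cases a with
      | zero =>
          cases t with
          | nil => rw [swapAdj_single]
          | cons y t' => show dmid P 0 (y :: x :: t') = _; simp only [dmid, P.comm y x]
      | succ p =>
          show dmid P (p+1) (x :: swapAdj p t) = _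
          simp only [dmid, ih p]

-- Part 4
theorem swapAdj_insertIdx {M : Type} (c : M) :
    ∀ (l : List M) (j a : ℕ), j ≤ a → j ≤ l.length →
      swapAdj (a + 1) (l.insertIdx j c) = (swapAdj a l).insertIdx j c := by
  intro l
  induction l with
  | nil =>
      intro j a hja hjl
      obtain rfl : j = 0 := by simpa using hjl
      simp [insertIdx, swapAdj_nil, swapAdj_single]
  | cons x t ih =>
      intro j a hja hjl
      cases j with
      | zero =>
          show swapAdj (a+1) (c :: x :: t) = _
          show c :: swapAdj a (x :: t) = _
          simp [insertIdx]
      | succ j' =>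
          obtain ⟨a', rfl⟩ : ∃ a', a = a' + 1 := ⟨a - 1, by omega⟩
          show swapAdj (a'+2) (x :: t.insertIdx j' c) = _
          show x :: swapAdj (a'+1) (t.insertIdx j' c) = _
          rw [ih j' a' (by omega) (by simpa using hjl)]
          show x :: (swapAdj a' t).insertIdx j' c = (x :: swapAdj a' t).insertIdx (j'+1) c
          simp [List.insertIdx]

/-- For a commutative partial monoid `M`, the symmetric group action on the
nerve `N_•M` by permuting components is well defined (a permutation of a
fully composable tuple is fully composable), and the transpositions
`θ_i` (swapping entries `i` and `i+1`, 1-indexed) satisfy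
`θ_i ∘ d_j = d_j ∘ θ_i` for `i < j-1`, `d_i ∘ θ_i = d_i`, and
`θ_i ∘ s_j = s_j ∘ θ_{i-1}` for `i > j+1` (where `s_j` inserts the unit
after the `j`-th entry). -/
theorem comm_partial_monoid_nerve_symmetric {M : Type} (P : CommPartialMonoid M) :
    (∀ l l' : List M, l.Perm l' → (pprod P l).isSome → (pprod P l').isSome) ∧
    (∀ n i j : ℕ, 1 ≤ i → i + 1 < j → j < n → ∀ l : List M, l.length = n →
      dmid P (j - 1) (swapAdj (i - 1) l) = (dmid P (j - 1) l).map (swapAdj (i - 1))) ∧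
    (∀ n i : ℕ, 1 ≤ i → i < n → ∀ l : List M, l.length = n →
      dmid P (i - 1) (swapAdj (i - 1) l) = dmid P (i - 1) l) ∧
    (∀ n i j : ℕ, j + 1 < i → i ≤ n → j ≤ n → ∀ l : List M, l.length = n →
      swapAdj (i - 1) (l.insertIdx j P.one) = (swapAdj (i - 2) l).insertIdx j P.one) := by
  refine ⟨?_, ?_, ?_, ?_⟩
  · intro l l' h hs
    rw [← pprod_perm P h]; exact hs
  · intro n i j hi hij hjn l hl
    exact dmid_swapAdj P l (i-1) (j-1) (by omega)
  · intro n i hi hin l hl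
    exact dmid_swapAdj_self P l (i-1)
  · intro n i j hji hin hjn l hl
    obtain ⟨a, rfl⟩ : ∃ a, i = a + 2 := ⟨i - 2, by omega⟩
    show swapAdj ((a+1)) _ = _
    have h2 : a + 2 - 2 = a := by omega
    rw [h2]
    exact swapAdj_insertIdx P.one l j a (by omega) (by omega)
end

section
/- Let M = {0,…,L} with the partial monoid structure given by addition, undefined when the sum exceeds L, and let N_•M be its nerve, with N_nM = {(x_1,…,x_n) : Σx_i ≤ L}. Define s_{n+1}^n(x_1,…,x_n) = (x_1,…,x_n, L − Σx_i) and τ^n(x_1,…,x_n) = (x_2,…,x_n, L − Σx_i). Then each τ^n is a bijection satisfying (τ^n)^{n+1} = id, and the paracyclic relations d_i ∘ τ^n = τ^{n−1} ∘ d_{i+1} for i < n and d_n ∘ τ^n = d_0 hold; i.e., the structure is cyclic. -/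
/- The nerve of the partial monoid `M = {0,…,L}` with addition, undefined
when the sum exceeds `L`: `N_m M = {(x_1,…,x_m) : Σ x_i ≤ L}`, encoded as
functions `Fin m → ℕ` (entry `x_{j+1}` at index `j`) with `Σ x ≤ L`. -/

/-- The cyclic operator `τ (x_1,…,x_m) = (x_2,…,x_m, L − Σ x_i)` at level
`m = n+1`. -/
def tauL (L n : ℕ) (x : Fin (n + 1) → ℕ) (j : Fin (n + 1)) : ℕ :=
  if h : j.val = n then L - (∑ i, x i) else x ⟨j.val + 1, by have := j.isLt; omega⟩

/-- The face maps at level `m = n+2`: `d_0` deletes `x_1`, `d_{n+2}` deletes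
`x_{n+2}`, and `d_i` for `0 < i < n+2` replaces `(x_i, x_{i+1})` by
`x_i + x_{i+1}`. -/
def dmapL (n : ℕ) (i : Fin (n + 3)) (x : Fin (n + 2) → ℕ) (j : Fin (n + 1)) : ℕ :=
  if i.val = 0 then x ⟨j.val + 1, by have := j.isLt; omega⟩
  else if h2 : i.val = n + 2 then x ⟨j.val, by have := j.isLt; omega⟩
  else if j.val + 1 < i.val then x ⟨j.val, by have := j.isLt; omega⟩
  else if j.val + 1 = i.val then
    x ⟨i.val - 1, by have := i.isLt; omega⟩ + x ⟨i.val, by have := i.isLt; omega⟩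
  else x ⟨j.val + 1, by have := j.isLt; omega⟩

/-! Append to `x ∈ N_n M` the entry `L − Σ x_i`: this identifies `N_n M` with the
`(n+1)`-tuples of sum exactly `L`, and `τ` with the cyclic rotation of such tuples. Hence
`τ^{n+1} = id`, and `τ` is a bijection with inverse `τ^n`. The face relations are a pointwise
comparison; the only input beyond bookkeeping is that the inner faces preserve the total sum,
while the last face drops `x_n`. -/

theorem Set.MapsTo.bijOn_of_iterate_succ_eq {α : Type*} {f : α → α} {s : Set α}
    (hf : Set.MapsTo f s s) (k : ℕ) (hper : ∀ x ∈ s, f^[k + 1] x = x) : Set.BijOn f s s :=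
  Set.InvOn.bijOn
    ⟨fun x hx => (Function.iterate_succ_apply f k x).symm.trans (hper x hx),
     fun x hx => (Function.iterate_succ_apply' f k x).symm.trans (hper x hx)⟩
    hf (hf.iterate k)

theorem finRotate_pow_self (n : ℕ) : finRotate n ^ n = 1 := by
  match n with
  | 0 => rfl
  | 1 => exact Subsingleton.elim _ _
  | n + 2 =>
    have horder : orderOf (finRotate (n + 2)) = n + 2 := by simp [isCycle_finRotate.orderOf]
    simpa only [horder] using pow_orderOf_eq_one (finRotate (n + 2))

theorem comp_finRotate_eq_snoc_tail {α : Type*} {m : ℕ} (y : Fin (m + 1) → α) :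
    y ∘ finRotate (m + 1) = Fin.snoc (Fin.tail y) (y 0) := by
  funext j
  induction j using Fin.lastCases with
  | last => simp
  | cast j => simp [Fin.tail]

theorem tail_snoc_eq_snoc_tail {α : Type*} {m : ℕ} (x : Fin (m + 1) → α) (c : α) :
    Fin.tail (Fin.snoc x c : Fin (m + 2) → α) = Fin.snoc (Fin.tail x) c := by
  conv_lhs => rw [← Fin.cons_self_tail x, ← Fin.cons_snoc_eq_snoc_cons]
  rfl

theorem tauL_eq_snoc_tail (L n : ℕ) (x : Fin (n + 1) → ℕ) :
    tauL L n x = Fin.snoc (Fin.tail x) (L - ∑ i, x i) := by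
  funext j
  induction j using Fin.lastCases with
  | last => simp [tauL]
  | cast j =>
    simp only [tauL, Fin.val_castSucc, j.isLt.ne, ↓reduceDIte, Fin.snoc_castSucc, Fin.tail]
    rfl

theorem sum_tauL {L n : ℕ} {x : Fin (n + 1) → ℕ} (hx : ∑ i, x i ≤ L) :
    ∑ i, tauL L n x i = L - x 0 := by
  rw [Fin.sum_univ_succ] at hx
  rw [tauL_eq_snoc_tail, Fin.sum_snoc, Fin.sum_univ_succ]
  simp only [Fin.tail]
  omega

theorem tauL_mapsTo (L n : ℕ) :
    Set.MapsTo (tauL L n) {x | ∑ i, x i ≤ L} {x | ∑ i, x i ≤ L} :=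
  fun _ hx => (sum_tauL hx).trans_le (Nat.sub_le _ _)

def cyclicLift (L : ℕ) {m : ℕ} (x : Fin m → ℕ) : Fin (m + 1) → ℕ :=
  Fin.snoc x (L - ∑ i, x i)

theorem cyclicLift_injective (L m : ℕ) : Function.Injective (cyclicLift L (m := m)) :=
  fun x y h => by simpa only [cyclicLift, Fin.init_snoc] using congrArg Fin.init h

theorem cyclicLift_tauL {L n : ℕ} {x : Fin (n + 1) → ℕ} (hx : ∑ i, x i ≤ L) :
    cyclicLift L (tauL L n x) = cyclicLift L x ∘ finRotate (n + 2) := by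
  have hx0 : x 0 ≤ L := (Finset.single_le_sum_of_canonicallyOrdered (Finset.mem_univ 0)).trans hx
  rw [comp_finRotate_eq_snoc_tail, cyclicLift, sum_tauL hx, tauL_eq_snoc_tail, cyclicLift,
    tail_snoc_eq_snoc_tail, Nat.sub_sub_self hx0]
  simp

theorem cyclicLift_iterate_tauL {L n : ℕ} {x : Fin (n + 1) → ℕ} (hx : ∑ i, x i ≤ L) (k : ℕ) :
    cyclicLift L ((tauL L n)^[k] x) = cyclicLift L x ∘ ⇑(finRotate (n + 2) ^ k) := by
  induction k with
  | zero => rfl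
  | succ k ih =>
    rw [Function.iterate_succ_apply', cyclicLift_tauL ((tauL_mapsTo L n).iterate k hx), ih,
      pow_succ, Equiv.Perm.coe_mul, Function.comp_assoc]

theorem tauL_iterate_period {L n : ℕ} {x : Fin (n + 1) → ℕ} (hx : ∑ i, x i ≤ L) :
    (tauL L n)^[n + 2] x = x :=
  cyclicLift_injective L (n + 1) <| by
    rw [cyclicLift_iterate_tauL hx, finRotate_pow_self, Equiv.Perm.coe_one, Function.comp_id]

theorem tauL_bijOn (L n : ℕ) : Set.BijOn (tauL L n) {x | ∑ i, x i ≤ L} {x | ∑ i, x i ≤ L} :=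
  (tauL_mapsTo L n).bijOn_of_iterate_succ_eq (n + 1) fun _ hx => tauL_iterate_period hx

theorem dmapL_zero (n : ℕ) (x : Fin (n + 2) → ℕ) : dmapL n 0 x = Fin.tail x := rfl

theorem dmapL_last (n : ℕ) (x : Fin (n + 2) → ℕ) :
    dmapL n (Fin.last (n + 2)) x = Fin.init x := by
  funext j
  simp only [dmapL, Fin.val_last, Nat.add_eq_zero_iff, OfNat.ofNat_ne_zero, and_false,
    ↓reduceIte, ↓reduceDIte]
  rfl

theorem sum_dmapL_of_pos_of_lt {n : ℕ} {i : Fin (n + 3)} (hpos : 0 < (i : ℕ))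
    (hlt : (i : ℕ) < n + 2) (x : Fin (n + 2) → ℕ) : ∑ j, dmapL n i x j = ∑ k, x k := by
  -- `x k` lands in entry `k` of the face if `k < i`, and in entry `k - 1` otherwise
  set f : Fin (n + 2) → ℕ := fun k => if (k : ℕ) < i then x k else 0
  set g : Fin (n + 2) → ℕ := fun k => if (i : ℕ) ≤ k then x k else 0
  have hsplit : ∀ j, dmapL n i x j = f j.castSucc + g j.succ := by
    intro j
    simp only [dmapL, f, g, Fin.val_castSucc, Fin.val_succ]
    split_ifs <;> (try simp only [zero_add, add_zero]) <;>
      first | omega | rfl | (congr 3 <;> omega)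
  calc ∑ j, dmapL n i x j = ∑ j : Fin (n + 1), f j.castSucc + ∑ j : Fin (n + 1), g j.succ := by
        simp only [hsplit, Finset.sum_add_distrib]
    _ = ∑ k, f k + ∑ k, g k := by
        have hf : f (Fin.last _) = 0 := if_neg (by simp only [Fin.val_last]; omega)
        have hg : g 0 = 0 := if_neg (by simp only [Fin.val_zero]; omega)
        rw [Fin.sum_univ_castSucc f, Fin.sum_univ_succ g, hf, hg, add_zero, zero_add]
    _ = ∑ k, x k := by
        rw [← Finset.sum_add_distrib]
        refine Finset.sum_congr rfl fun k _ => ?_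
        simp only [f, g]
        split_ifs <;> omega

theorem dmapL_tauL_of_le {L n : ℕ} {i : Fin (n + 3)} (hi : (i : ℕ) ≤ n) (x : Fin (n + 2) → ℕ) :
    dmapL n i (tauL L (n + 1) x) = tauL L n (dmapL n (i + 1) x) := by
  have hi1 : ((i + 1 : Fin (n + 3)) : ℕ) = i + 1 :=
    Fin.val_add_one_of_lt (by rw [Fin.lt_def, Fin.val_last]; omega)
  have hsum := sum_dmapL_of_pos_of_lt (i := i + 1) (by omega) (by omega) x
  funext j
  simp only [tauL, hsum]
  simp only [dmapL, tauL, hi1]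
  split_ifs <;> first | omega | contradiction | (congr 3 <;> omega)

theorem dmapL_tauL_of_eq {L n : ℕ} {i : Fin (n + 3)} (hi : (i : ℕ) = n + 1)
    (x : Fin (n + 2) → ℕ) (hx : ∑ k, x k ≤ L) :
    dmapL n i (tauL L (n + 1) x) = tauL L n (dmapL n (i + 1) x) := by
  have hi1 : i + 1 = Fin.last (n + 2) :=
    Fin.ext (by rw [Fin.val_add_one_of_lt (by rw [Fin.lt_def, Fin.val_last]; omega)]; simp [hi])
  have hsum : ∑ k, dmapL n (i + 1) x k = ∑ k, x k - x ⟨n + 1, by omega⟩ := by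
    rw [hi1, dmapL_last, Fin.sum_univ_castSucc x]
    exact (Nat.add_sub_cancel _ _).symm
  have hlast : x ⟨n + 1, by omega⟩ ≤ ∑ k, x k :=
    Finset.single_le_sum_of_canonicallyOrdered (Finset.mem_univ _)
  funext j
  simp only [tauL, hsum]
  simp only [dmapL, tauL, hi1, hi, Fin.val_last, Nat.add_sub_cancel]
  -- `omega` would treat the sums over `Fin (n + 1 + 1)` and `Fin (n + 2)` as distinct atoms
  generalize ∑ k, x k = S at *
  split_ifs <;> first | omega | contradiction

theorem dmapL_last_tauL (L n : ℕ) (x : Fin (n + 2) → ℕ) :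
    dmapL n (Fin.last (n + 2)) (tauL L (n + 1) x) = dmapL n 0 x := by
  rw [dmapL_last, dmapL_zero, tauL_eq_snoc_tail, Fin.init_snoc]

/-- For `M = {0,…,L}` with partial addition, the operators `τ` on the nerve
are bijections of `N_m M = {x : Σ x ≤ L}` with `τ^{m+1} = id`, and the
paracyclic face relations `d_i ∘ τ = τ ∘ d_{i+1}` (`i < m`) and
`d_m ∘ τ = d_0` hold; i.e. the structure is cyclic. -/
theorem bounded_sum_nerve_cyclic (L n : ℕ) :
    Set.BijOn (tauL L n) {x | ∑ i, x i ≤ L} {x | ∑ i, x i ≤ L} ∧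
    (∀ x : Fin (n + 1) → ℕ, (∑ i, x i) ≤ L → (tauL L n)^[n + 2] x = x) ∧
    (∀ i : Fin (n + 3), i.val < n + 2 → ∀ x : Fin (n + 2) → ℕ, (∑ k, x k) ≤ L →
      dmapL n i (tauL L (n + 1) x) = tauL L n (dmapL n (i + 1) x)) ∧
    (∀ x : Fin (n + 2) → ℕ, (∑ k, x k) ≤ L →
      dmapL n (Fin.last (n + 2)) (tauL L (n + 1) x) = dmapL n 0 x) := by
  refine ⟨tauL_bijOn L n, fun x hx => tauL_iterate_period hx, fun i hi x hx => ?_,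
    fun x _ => dmapL_last_tauL L n x⟩
  rcases Nat.lt_succ_iff_lt_or_eq.mp hi with hlt | heq
  · exact dmapL_tauL_of_le (Nat.lt_succ_iff.mp hlt) x
  · exact dmapL_tauL_of_eq heq x hx
end
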